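/- arXiv:2205.14765 — 3 statements merged into one kernel-verified Lean document; each statement's English description precedes it below -/
import Mathlib

section
/- Let 0 < ε < 1/2 and let g ∈ C¹((0,∞)) be positive with g(t) ≥ c₀ > 0 and g(t) ≤ c₂⟨t⟩^ε for all t > 0, and suppose that lim_{t→∞} (g(t) − 2t g′(t))/g(t) = c_g for some constant c_g ∈ (0,1). Let T(t) := ∫₀^t g(u)^{-2} du. Then lim_{t→∞} T(t)·g(t)²/t = 1/c_g. Consequently, setting c_g′ := 1/c_g − 1 > 0, there exists t_M > 0 such that T(t)·g(t)² − t ≥ (c_g′/2)·t for all t ≥ t_M. -/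
/-!
With `φ t = t / g t ^ 2` one has `φ' = (g - 2 t g') / g ^ 3` and `T' = g⁻²`, so
`T' / φ' = g / (g - 2 t g') → 1 / c_g`. Since `g ^ 2 ≲ ⟨t⟩ ^ (2ε)` with `2ε < 1`, `φ → ∞`, and
L'Hôpital's rule in its `∞/∞` form (derived from Cauchy's mean value theorem) gives
`T / φ = T g² / t → 1 / c_g > 1`.
-/

open MeasureTheory Filter Set Topology

theorem lhopital_atTop_of_tendsto_atTop {f g f' g' : ℝ → ℝ} {L : ℝ}
    (hff' : ∀ᶠ x in atTop, HasDerivAt f (f' x) x) (hgg' : ∀ᶠ x in atTop, HasDerivAt g (g' x) x)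
    (hg' : ∀ᶠ x in atTop, g' x ≠ 0) (hg : Tendsto g atTop atTop)
    (hdiv : Tendsto (fun x => f' x / g' x) atTop (𝓝 L)) :
    Tendsto (fun x => f x / g x) atTop (𝓝 L) := by
  rw [Metric.tendsto_nhds]
  intro e he
  obtain ⟨a, ha⟩ := eventually_atTop.1 <| hff'.and <| hgg'.and <| hg'.and <|
    Metric.tendsto_nhds.1 hdiv _ (half_pos he)
  let C := |f a| + |g a| * (|L| + e / 2)
  filter_upwards [eventually_gt_atTop a, hg.eventually_gt_atTop 0,
    hg.eventually_gt_atTop (2 * C / e)] with b hab hgb hgbC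
  have hf_deriv : ∀ x ∈ Icc a b, HasDerivAt f (f' x) x := fun x hx => (ha x hx.1).1
  have hg_deriv : ∀ x ∈ Icc a b, HasDerivAt g (g' x) x := fun x hx => (ha x hx.1).2.1
  obtain ⟨c, hc, hmvt⟩ := exists_ratio_hasDerivAt_eq_ratio_slope f f' hab
    (fun x hx => (hf_deriv x hx).continuousAt.continuousWithinAt)
    (fun x hx => hf_deriv x (Ioo_subset_Icc_self hx)) g g'
    (fun x hx => (hg_deriv x hx).continuousAt.continuousWithinAt)
    (fun x hx => hg_deriv x (Ioo_subset_Icc_self hx))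
  obtain ⟨-, -, hg'_ne, hrL⟩ := ha c hc.1.le
  set r := f' c / g' c
  -- `f b - f a = (g b - g a) r` with `r` near `L`; the terms at `a` are negligible against `g b`.
  rw [Real.dist_eq] at hrL ⊢
  have hfb : f b = f a + (g b - g a) * r := by
    simp only [r]; field_simp; linarith
  have hr : |r| ≤ |L| + e / 2 := by
    calc |r| = |L + (r - L)| := by ring_nf
      _ ≤ |L| + |r - L| := abs_add_le _ _
      _ ≤ |L| + e / 2 := by linarith
  have hnum : |f a - g a * r| ≤ C :=
    calc |f a - g a * r| ≤ |f a| + |g a| * |r| := by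
          rw [← abs_mul]; exact abs_sub _ _
      _ ≤ C := add_le_add_right (mul_le_mul_of_nonneg_left hr (abs_nonneg _)) _
  have hsmall : |f a - g a * r| / g b < e / 2 := by
    rw [div_lt_iff₀ hgb]
    rw [div_lt_iff₀ he] at hgbC
    linarith
  calc |f b / g b - L| = |(f a - g a * r) / g b + (r - L)| := by
        rw [hfb]; congr 1; field_simp; ring
    _ ≤ |f a - g a * r| / g b + |r - L| :=
        (abs_add_le _ _).trans_eq (by rw [abs_div, abs_of_pos hgb])
    _ < e := by linarith

theorem intervalIntegrable_of_continuousOn_Ioi_of_norm_le {f : ℝ → ℝ} {a t C : ℝ}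
    (hf : ContinuousOn f (Ioi a)) (hC : ∀ u > a, ‖f u‖ ≤ C) (ht : a ≤ t) :
    IntervalIntegrable f volume a t := by
  refine (intervalIntegrable_const (c := C)).mono_fun' ?_ ?_
  · rw [uIoc_of_le ht]
    exact hf.mono Ioc_subset_Ioi_self |>.aestronglyMeasurable measurableSet_Ioc
  · rw [uIoc_of_le ht]
    exact (ae_restrict_iff' measurableSet_Ioc).2 (ae_of_all _ fun u hu => hC u hu.1)

theorem hasDerivAt_integral_of_continuousOn_Ioi_of_norm_le {f : ℝ → ℝ} {a t C : ℝ}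
    (hf : ContinuousOn f (Ioi a)) (hC : ∀ u > a, ‖f u‖ ≤ C) (ht : a < t) :
    HasDerivAt (fun s => ∫ u in a..s, f u) (f t) t :=
  intervalIntegral.integral_hasDerivAt_right
    (intervalIntegrable_of_continuousOn_Ioi_of_norm_le hf hC ht.le)
    (hf.stronglyMeasurableAtFilter isOpen_Ioi t ht)
    (hf.continuousAt (Ioi_mem_nhds ht))

theorem exists_pos_forall_ge_mul_le_of_tendsto_div {h : ℝ → ℝ} {a L : ℝ}
    (hlim : Tendsto (fun t => h t / t) atTop (𝓝 L)) (haL : a < L) :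
    ∃ t₀ > 0, ∀ t ≥ t₀, a * t ≤ h t := by
  obtain ⟨t₀, ht₀⟩ := eventually_atTop.1 <|
    (hlim.eventually (lt_mem_nhds haL)).and (eventually_gt_atTop 0)
  refine ⟨max t₀ 1, by positivity, fun t ht => ?_⟩
  obtain ⟨hlt, htpos⟩ := ht₀ t (le_of_max_le_left ht)
  exact ((lt_div_iff₀ htpos).1 hlt).le

theorem tendsto_sqrt_one_add_sq_atTop : Tendsto (fun t : ℝ => √(1 + t ^ 2)) atTop atTop :=
  tendsto_atTop_mono (fun t => (le_abs_self t).trans_eq (Real.sqrt_sq_eq_abs t).symm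
    |>.trans (Real.sqrt_le_sqrt (by linarith))) tendsto_id

theorem tendsto_div_sq_atTop_of_le_sqrt_one_add_sq_rpow {g : ℝ → ℝ} {c ε : ℝ} (hε : ε < 1 / 2)
    (hpos : ∀ t > 0, 0 < g t) (hub : ∀ t > 0, g t ≤ c * √(1 + t ^ 2) ^ ε) :
    Tendsto (fun t => t / g t ^ 2) atTop atTop := by
  have hc : 0 < c := pos_of_mul_pos_left ((hpos 1 one_pos).trans_le (hub 1 one_pos))
    (by positivity)
  refine tendsto_atTop_mono' atTop ?_ <| ((tendsto_rpow_atTop (by linarith : 0 < 1 - 2 * ε)).comp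
    tendsto_sqrt_one_add_sq_atTop).const_mul_atTop (inv_pos.2 (by positivity : 0 < √2 * c ^ 2))
  filter_upwards [eventually_ge_atTop 1] with t ht
  set r := √(1 + t ^ 2)
  have hr : 0 < r := by positivity
  have hrt : r ≤ √2 * t := by
    rw [← Real.sqrt_sq (by linarith : 0 ≤ t), ← Real.sqrt_mul zero_le_two]
    exact Real.sqrt_le_sqrt (by nlinarith)
  have hgt : 0 < g t := hpos t (by linarith)
  have hg2 : g t ^ 2 ≤ c ^ 2 * r ^ (2 * ε) := by
    calc g t ^ 2 ≤ (c * r ^ ε) ^ 2 := pow_le_pow_left₀ hgt.le (hub t (by linarith)) 2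
      _ = c ^ 2 * r ^ (2 * ε) := by rw [mul_pow, ← Real.rpow_mul_natCast hr.le]; ring_nf
  calc (√2 * c ^ 2)⁻¹ * r ^ (1 - 2 * ε) = (r / √2) / (c ^ 2 * r ^ (2 * ε)) := by
        rw [Real.rpow_sub hr, Real.rpow_one]; field_simp
    _ ≤ t / g t ^ 2 := by
        gcongr
        rw [div_le_iff₀ (by positivity)]; linarith

theorem hasDerivAt_integral_inv_sq {g : ℝ → ℝ} {c t : ℝ} (hc : 0 < c)
    (hg : ContinuousOn g (Ioi 0)) (hlb : ∀ u > 0, c ≤ g u) (ht : 0 < t) :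
    HasDerivAt (fun s => ∫ u in 0..s, (g u ^ 2)⁻¹) ((g t ^ 2)⁻¹) t := by
  have hpos : ∀ u > 0, 0 < g u := fun u hu => hc.trans_le (hlb u hu)
  refine hasDerivAt_integral_of_continuousOn_Ioi_of_norm_le (C := (c ^ 2)⁻¹)
    ((hg.pow 2).inv₀ fun u hu => pow_ne_zero 2 (hpos u hu).ne') (fun u hu => ?_) ht
  rw [norm_inv, norm_pow, Real.norm_of_nonneg (hpos u hu).le]
  exact inv_anti₀ (by positivity) (pow_le_pow_left₀ hc.le (hlb u hu) 2)

theorem hasDerivAt_div_sq {g : ℝ → ℝ} {g' t : ℝ} (hg : HasDerivAt g g' t) (ht : g t ≠ 0) :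
    HasDerivAt (fun s => s / g s ^ 2) ((g t - 2 * t * g') / g t ^ 3) t := by
  refine ((hasDerivAt_id' t).div (hg.fun_pow 2) (pow_ne_zero 2 ht)).congr_deriv ?_
  field_simp
  ring

theorem stmt2_general (ε c₀ c₂ c_g : ℝ) (hε' : ε < 1/2)
    (hc₀ : 0 < c₀) (hcg : 0 < c_g) (hcg' : c_g < 1)
    (g g' : ℝ → ℝ)
    (hgd : ∀ t > 0, HasDerivAt g (g' t) t)
    (hglb : ∀ t > 0, c₀ ≤ g t)
    (hgub : ∀ t > 0, g t ≤ c₂ * Real.sqrt (1 + t^2) ^ ε)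
    (hlim : Tendsto (fun t => (g t - 2*t*g' t) / g t) atTop (nhds c_g))
    (T : ℝ → ℝ) (hT : ∀ t, T t = ∫ u in (0:ℝ)..t, (g u ^ 2)⁻¹) :
    Tendsto (fun t => T t * (g t)^2 / t) atTop (nhds (1/c_g)) ∧
    ∃ t_M > 0, ∀ t ≥ t_M, (1/c_g - 1)/2 * t ≤ T t * (g t)^2 - t := by
  have hgpos : ∀ t > 0, 0 < g t := fun t ht => hc₀.trans_le (hglb t ht)
  have hT' : ∀ᶠ t in atTop, HasDerivAt T ((g t ^ 2)⁻¹) t := by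
    rw [funext hT]
    filter_upwards [eventually_gt_atTop 0] with t ht
    exact hasDerivAt_integral_inv_sq hc₀
      (fun u hu => (hgd u hu).continuousAt.continuousWithinAt) hglb ht
  have hφ' : ∀ᶠ t in atTop,
      HasDerivAt (fun s => s / g s ^ 2) ((g t - 2 * t * g' t) / g t ^ 3) t :=
    (eventually_gt_atTop 0).mono fun t ht => hasDerivAt_div_sq (hgd t ht) (hgpos t ht).ne'
  have hφ'_ne : ∀ᶠ t in atTop, (g t - 2 * t * g' t) / g t ^ 3 ≠ 0 := by
    filter_upwards [eventually_gt_atTop 0, hlim.eventually (lt_mem_nhds hcg)] with t ht hnum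
    exact (div_pos ((div_pos_iff_of_pos_right (hgpos t ht)).1 hnum) (pow_pos (hgpos t ht) 3)).ne'
  have hratio : Tendsto (fun t => (g t ^ 2)⁻¹ / ((g t - 2 * t * g' t) / g t ^ 3)) atTop
      (𝓝 (1 / c_g)) := by
    rw [one_div]
    refine (hlim.inv₀ hcg.ne').congr' ?_
    filter_upwards [eventually_gt_atTop 0] with t ht
    field_simp [(hgpos t ht).ne']
  have hmain : Tendsto (fun t => T t * g t ^ 2 / t) atTop (𝓝 (1 / c_g)) := by
    simpa only [div_div_eq_mul_div] using lhopital_atTop_of_tendsto_atTop hT' hφ' hφ'_ne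
      (tendsto_div_sq_atTop_of_le_sqrt_one_add_sq_rpow hε' hgpos hgub) hratio
  have hcg₁ : 1 < 1 / c_g := by rw [lt_div_iff₀ hcg]; linarith
  obtain ⟨t_M, ht_M, hM⟩ := exists_pos_forall_ge_mul_le_of_tendsto_div hmain
    (a := 1 + (1 / c_g - 1) / 2) (by linarith)
  exact ⟨hmain, t_M, ht_M, fun t ht => by linarith [hM t ht]⟩

/-- For `g ∈ C¹((0,∞))` positive with `g t ≥ c₀ > 0`, `g t ≤ c₂⟨t⟩^ε`
(`0 < ε < 1/2`), and `(g t - 2t g' t)/g t → c_g ∈ (0,1)`, setting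
`T t = ∫₀ᵗ g(u)⁻² du`, one has `T(t) g(t)²/t → 1/c_g`, and hence, with
`c_g' = 1/c_g - 1 > 0`, `T(t) g(t)² - t ≥ (c_g'/2) t` for all large `t`. -/
theorem stmt2 (ε c₀ c₂ c_g : ℝ) (hε : 0 < ε) (hε' : ε < 1/2)
    (hc₀ : 0 < c₀) (hcg : 0 < c_g) (hcg' : c_g < 1)
    (g g' : ℝ → ℝ)
    (hgd : ∀ t > 0, HasDerivAt g (g' t) t)
    (hg'c : ContinuousOn g' (Set.Ioi (0:ℝ)))
    (hglb : ∀ t > 0, c₀ ≤ g t)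
    (hgub : ∀ t > 0, g t ≤ c₂ * Real.sqrt (1 + t^2) ^ ε)
    (hlim : Tendsto (fun t => (g t - 2*t*g' t) / g t) atTop (nhds c_g))
    (T : ℝ → ℝ) (hT : ∀ t, T t = ∫ u in (0:ℝ)..t, (g u ^ 2)⁻¹) :
    Tendsto (fun t => T t * (g t)^2 / t) atTop (nhds (1/c_g)) ∧
    ∃ t_M > 0, ∀ t ≥ t_M, (1/c_g - 1)/2 * t ≤ T t * (g t)^2 - t :=
  stmt2_general ε c₀ c₂ c_g hε' hc₀ hcg hcg' g g' hgd hglb hgub hlim T hT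
end

section
/- Let n ≥ 5 and ε ∈ (2/n, 1/2), and let g : ℝ → ℝ be continuous with c₁⟨t⟩^ε ≤ g(t) ≤ c₂⟨t⟩^ε for all t ≥ 0, for some 0 < c₁ ≤ c₂. Let T(t) := ∫₀^t g(u)^{-2} du and let T⁻¹ be its inverse on [0,∞). Then (n/2 − 2)·ε/(1 − 2ε) > 1, there exists c > 0 such that g(T⁻¹(u)) ≥ c·u^{ε/(1−2ε)} for all u ≥ 1, and consequently the function u ↦ g(T⁻¹(u))^{−(n/2−2)} is integrable on [1, ∞). -/
/-!
Since `g(t) ≥ c₁ t^ε`, the time change satisfies `T(t) ≤ A t^{1-2ε}` with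
`A = c₁⁻² / (1 - 2ε)`. Inverting, `T⁻¹(u) ≥ (u/A)^{1/(1-2ε)}`, hence
`g(T⁻¹(u)) ≥ c₁ (u/A)^{ε/(1-2ε)}`. Raised to the power `-(n/2 - 2)` this is dominated by
`u^{-p}` with `p = (n/2 - 2) ε/(1 - 2ε) > 1`, which is integrable on `[1, ∞)`.
-/

open MeasureTheory Filter Set

lemma one_lt_mul_div_one_sub_two_mul {n ε : ℝ} (hn : 0 < n) (hε : 2 / n < ε) (hε' : ε < 1 / 2) :
    1 < (n / 2 - 2) * ε / (1 - 2 * ε) := by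
  have hnε : 2 < ε * n := by rwa [div_lt_iff₀ hn] at hε
  rw [lt_div_iff₀ (by linarith)]
  linarith

lemma rpow_le_sqrt_one_add_sq_rpow {t ε : ℝ} (ht : 0 ≤ t) (hε : 0 ≤ ε) :
    t ^ ε ≤ Real.sqrt (1 + t ^ 2) ^ ε :=
  Real.rpow_le_rpow ht (Real.le_sqrt_of_sq_le (by linarith)) hε

lemma monotone_integral_of_nonneg {f : ℝ → ℝ} (hf : ∀ a b, IntervalIntegrable f volume a b)
    (hf₀ : ∀ u, 0 ≤ f u) : Monotone fun t => ∫ u in (0 : ℝ)..t, f u := by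
  intro a b hab
  have : 0 ≤ ∫ u in a..b, f u := intervalIntegral.integral_nonneg hab fun u _ => hf₀ u
  rw [← intervalIntegral.integral_interval_sub_left (hf 0 b) (hf 0 a)] at this
  simpa using this

section TimeChange

variable {g : ℝ → ℝ} {c ε : ℝ}

lemma integral_inv_sq_le_of_mul_rpow_le (hc : 0 < c) (hε : ε < 1 / 2) {t : ℝ} (ht : 0 ≤ t)
    (hint : IntervalIntegrable (fun u => (g u ^ 2)⁻¹) volume 0 t)
    (hg : ∀ u ≥ 0, c * u ^ ε ≤ g u) :
    ∫ u in (0 : ℝ)..t, (g u ^ 2)⁻¹ ≤ c⁻¹ ^ 2 / (1 - 2 * ε) * t ^ (1 - 2 * ε) := by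
  have hbound : (fun u => (g u ^ 2)⁻¹) ≤ᵐ[volume.restrict (Icc 0 t)]
      fun u => c⁻¹ ^ 2 * u ^ (-(2 * ε)) := by
    filter_upwards [ae_restrict_mem measurableSet_Icc,
      ae_restrict_of_ae (Measure.ae_ne volume 0)] with u hu hu0
    have hu : 0 < u := lt_of_le_of_ne hu.1 (Ne.symm hu0)
    have hpos : 0 < c * u ^ ε := by positivity
    calc (g u ^ 2)⁻¹ ≤ ((c * u ^ ε) ^ 2)⁻¹ :=
          inv_anti₀ (by positivity) (pow_le_pow_left₀ hpos.le (hg u hu.le) 2)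
      _ = c⁻¹ ^ 2 * u ^ (-(2 * ε)) := by
          rw [mul_pow, mul_inv, ← inv_pow, ← Real.rpow_natCast (u ^ ε) 2,
            ← Real.rpow_mul hu.le, Real.rpow_neg hu.le]
          norm_num [mul_comm]
  have hmajorant : IntervalIntegrable (fun u => c⁻¹ ^ 2 * u ^ (-(2 * ε))) volume 0 t :=
    (intervalIntegral.intervalIntegrable_rpow' (by linarith)).const_mul _
  calc ∫ u in (0 : ℝ)..t, (g u ^ 2)⁻¹ ≤ ∫ u in (0 : ℝ)..t, c⁻¹ ^ 2 * u ^ (-(2 * ε)) :=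
        intervalIntegral.integral_mono_ae_restrict ht hint hmajorant hbound
    _ = c⁻¹ ^ 2 / (1 - 2 * ε) * t ^ (1 - 2 * ε) := by
        rw [intervalIntegral.integral_const_mul, integral_rpow (Or.inl (by linarith)),
          Real.zero_rpow (by linarith), show -(2 * ε) + 1 = 1 - 2 * ε by ring]
        ring

lemma mul_integral_inv_sq_rpow_le (hc : 0 < c) (hε : 0 ≤ ε) (hε' : ε < 1 / 2) {t : ℝ}
    (ht : 0 ≤ t) (hint : IntervalIntegrable (fun u => (g u ^ 2)⁻¹) volume 0 t)
    (hg : ∀ u ≥ 0, c * u ^ ε ≤ g u) :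
    c / (c⁻¹ ^ 2 / (1 - 2 * ε)) ^ (ε / (1 - 2 * ε)) *
      (∫ u in (0 : ℝ)..t, (g u ^ 2)⁻¹) ^ (ε / (1 - 2 * ε)) ≤ g t := by
  set A := c⁻¹ ^ 2 / (1 - 2 * ε)
  set T := ∫ u in (0 : ℝ)..t, (g u ^ 2)⁻¹
  have h2ε : 0 < 1 - 2 * ε := by linarith
  have hA : 0 < A := by positivity
  have hT₀ : 0 ≤ T := intervalIntegral.integral_nonneg ht fun u _ => by positivity
  have hT : 0 ≤ T / A := div_nonneg hT₀ hA.le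
  have hinv : (T / A) ^ (1 - 2 * ε)⁻¹ ≤ t := by
    rw [Real.rpow_inv_le_iff_of_pos hT ht h2ε, div_le_iff₀ hA, mul_comm]
    exact integral_inv_sq_le_of_mul_rpow_le hc hε' ht hint hg
  calc c / A ^ (ε / (1 - 2 * ε)) * T ^ (ε / (1 - 2 * ε))
        = c * ((T / A) ^ (1 - 2 * ε)⁻¹) ^ ε := by
          rw [← Real.rpow_mul hT, inv_mul_eq_div, Real.div_rpow hT₀ hA.le]
          ring
    _ ≤ c * t ^ ε := by gcongr
    _ ≤ g t := hg t ht

end TimeChange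

lemma integrableOn_Ici_rpow_neg_of_mul_rpow_le {f : ℝ → ℝ} {c q m : ℝ}
    (hf : AEMeasurable f (volume.restrict (Ici 1))) (hc : 0 < c) (hm : 0 ≤ m)
    (hqm : 1 < q * m) (hlb : ∀ u ≥ 1, c * u ^ q ≤ f u) :
    IntegrableOn (fun u => f u ^ (-m)) (Ici 1) := by
  have hmajorant : IntegrableOn (fun u : ℝ => c ^ (-m) * u ^ (q * -m)) (Ici 1) := by
    rw [integrableOn_Ici_iff_integrableOn_Ioi]
    exact (integrableOn_Ioi_rpow_of_lt (by linarith) one_pos).const_mul _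
  refine hmajorant.mono' (hf.pow_const _).aestronglyMeasurable ?_
  filter_upwards [ae_restrict_mem measurableSet_Ici] with u (hu : 1 ≤ u)
  have hu₀ : 0 < u := one_pos.trans_le hu
  have hfu : 0 < f u := (by positivity : 0 < c * u ^ q).trans_le (hlb u hu)
  rw [Real.norm_of_nonneg (Real.rpow_nonneg hfu.le _)]
  calc f u ^ (-m) ≤ (c * u ^ q) ^ (-m) :=
        Real.rpow_le_rpow_of_nonpos (by positivity) (hlb u hu) (by linarith)
    _ = c ^ (-m) * u ^ (q * -m) := by
        rw [Real.mul_rpow hc.le (by positivity), ← Real.rpow_mul hu₀.le]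

theorem stmt5_general (n : ℕ) (hn : 5 ≤ n) (ε c₁ : ℝ)
    (hε : 2/(n:ℝ) < ε) (hε' : ε < 1/2) (hc₁ : 0 < c₁)
    (g : ℝ → ℝ) (hgcont : Continuous g) (hgpos : ∀ t, 0 < g t)
    (hglb : ∀ t ≥ 0, c₁ * Real.sqrt (1 + t^2) ^ ε ≤ g t)
    (T : ℝ → ℝ) (hT : ∀ t, T t = ∫ u in (0:ℝ)..t, (g u ^ 2)⁻¹)
    (Tinv : ℝ → ℝ)
    (hTinv' : ∀ s ≥ 0, 0 ≤ Tinv s ∧ T (Tinv s) = s) :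
    1 < ((n:ℝ)/2 - 2) * ε / (1 - 2*ε) ∧
    (∃ c > 0, ∀ u ≥ 1, c * u ^ (ε/(1-2*ε)) ≤ g (Tinv u)) ∧
    IntegrableOn (fun u => g (Tinv u) ^ (-((n:ℝ)/2 - 2))) (Set.Ici (1:ℝ)) := by
  obtain rfl : T = fun t => ∫ u in (0 : ℝ)..t, (g u ^ 2)⁻¹ := funext hT
  have hn₅ : (5 : ℝ) ≤ n := by exact_mod_cast hn
  have hexp := one_lt_mul_div_one_sub_two_mul (by linarith) hε hε'
  have hε₀ : 0 < ε := lt_trans (div_pos two_pos (by linarith)) hε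
  have hint : ∀ a b, IntervalIntegrable (fun u => (g u ^ 2)⁻¹) volume a b := fun a b =>
    ((hgcont.pow 2).inv₀ fun u => (pow_pos (hgpos u) 2).ne').intervalIntegrable a b
  have hg : ∀ t ≥ 0, c₁ * t ^ ε ≤ g t := fun t ht =>
    (mul_le_mul_of_nonneg_left (rpow_le_sqrt_one_add_sq_rpow ht hε₀.le) hc₁.le).trans (hglb t ht)
  have hlb : ∀ u ≥ 1, c₁ / (c₁⁻¹ ^ 2 / (1 - 2 * ε)) ^ (ε / (1 - 2 * ε)) *
      u ^ (ε / (1 - 2 * ε)) ≤ g (Tinv u) := fun u hu => by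
    obtain ⟨hTinv₀, hTTinv⟩ := hTinv' u (by linarith)
    simpa only [hTTinv] using mul_integral_inv_sq_rpow_le hc₁ hε₀.le hε' hTinv₀ (hint 0 _) hg
  have hc : 0 < c₁ / (c₁⁻¹ ^ 2 / (1 - 2 * ε)) ^ (ε / (1 - 2 * ε)) :=
    div_pos hc₁ (Real.rpow_pos_of_pos (div_pos (by positivity) (by linarith)) _)
  have hTinv_mono : MonotoneOn Tinv (Ici 1) :=
    Function.monotoneOn_of_rightInvOn_of_mapsTo
      ((monotone_integral_of_nonneg hint fun u => by positivity).monotoneOn univ)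
      (fun u hu => (hTinv' u (by linarith [mem_Ici.mp hu])).2) (mapsTo_univ _ _)
  refine ⟨hexp, ⟨_, hc, hlb⟩, integrableOn_Ici_rpow_neg_of_mul_rpow_le ?_ hc ?_ ?_ hlb⟩
  · exact hgcont.measurable.comp_aemeasurable
      (aemeasurable_restrict_of_monotoneOn measurableSet_Ici hTinv_mono)
  · linarith
  · rwa [mul_comm, ← mul_div_assoc]

/-- For `n ≥ 5`, `ε ∈ (2/n, 1/2)` and `g` continuous with
`c₁⟨t⟩^ε ≤ g t ≤ c₂⟨t⟩^ε` for `t ≥ 0`, with `T t = ∫₀ᵗ g(u)⁻² du` and `T⁻¹` its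
inverse on `[0,∞)`: one has `(n/2-2)ε/(1-2ε) > 1`, the lower bound
`g(T⁻¹ u) ≥ c u^{ε/(1-2ε)}` for `u ≥ 1`, and `u ↦ g(T⁻¹ u)^{-(n/2-2)}` is
integrable on `[1,∞)`. -/
theorem stmt5 (n : ℕ) (hn : 5 ≤ n) (ε c₁ c₂ : ℝ)
    (hε : 2/(n:ℝ) < ε) (hε' : ε < 1/2) (hc₁ : 0 < c₁) (hc : c₁ ≤ c₂)
    (g : ℝ → ℝ) (hgcont : Continuous g) (hgpos : ∀ t, 0 < g t)
    (hglb : ∀ t ≥ 0, c₁ * Real.sqrt (1 + t^2) ^ ε ≤ g t)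
    (hgub : ∀ t ≥ 0, g t ≤ c₂ * Real.sqrt (1 + t^2) ^ ε)
    (T : ℝ → ℝ) (hT : ∀ t, T t = ∫ u in (0:ℝ)..t, (g u ^ 2)⁻¹)
    (Tinv : ℝ → ℝ) (hTinv : ∀ t ≥ 0, Tinv (T t) = t)
    (hTinv' : ∀ s ≥ 0, 0 ≤ Tinv s ∧ T (Tinv s) = s) :
    1 < ((n:ℝ)/2 - 2) * ε / (1 - 2*ε) ∧
    (∃ c > 0, ∀ u ≥ 1, c * u ^ (ε/(1-2*ε)) ≤ g (Tinv u)) ∧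
    IntegrableOn (fun u => g (Tinv u) ^ (-((n:ℝ)/2 - 2))) (Set.Ici (1:ℝ)) :=
  stmt5_general n hn ε c₁ hε hε' hc₁ g hgcont hgpos hglb T hT Tinv hTinv'
end

section
/- Let n ≥ 2 and let f : ℝⁿ → ℂ be a C¹ radial function (i.e. f(x) depends only on |x|) with compact support. Then there is a constant C_n > 0, depending only on n, such that for every x ≠ 0: |f(x)|² ≤ C_n |x|^{−(n−1)} ‖f‖_{L²(ℝⁿ)} ‖∇f‖_{L²(ℝⁿ)}. In particular, if ‖f‖_{L²} and ‖∇f‖_{L²} are both at most R, then |f(x)| ≤ √(C_n) · R · |x|^{−(n−1)/2} for |x| ≥ 1. -/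
/-!
Write `f x = u ‖x‖`. Polar coordinates turn both L² norms into weighted integrals
`n |B₁| ∫₀^∞ t^(n-1) (⋯)² dt`. For the profile `u`, the fundamental theorem of calculus gives
`r^(n-1) |u r|² = -∫_r^∞ (t^(n-1) |u t|²)' dt ≤ 2 ∫_r^∞ t^(n-1) |u t| |u' t| dt`, since the term
coming from the derivative of the weight has a favourable sign; Cauchy–Schwarz bounds the last
integral by the product of the two weighted L² norms. Finally `|u'| ≤ ‖Df‖` along a ray, and
`‖Df‖` is itself radial because `f` is invariant under reflections.
-/

open MeasureTheory Set Metric Module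

lemma integral_mul_mul_le_L2_mul_L2_of_nonneg {α : Type*} [MeasurableSpace α] {μ : Measure α}
    {ρ f g : α → ℝ} (hρ : 0 ≤ᵐ[μ] ρ) (hf : 0 ≤ f) (hg : 0 ≤ g)
    (hfL : MemLp (fun x => √(ρ x) * f x) 2 μ) (hgL : MemLp (fun x => √(ρ x) * g x) 2 μ) :
    ∫ x, ρ x * (f x * g x) ∂μ ≤
      (∫ x, ρ x * f x ^ 2 ∂μ) ^ (1 / 2 : ℝ) * (∫ x, ρ x * g x ^ 2 ∂μ) ^ (1 / 2 : ℝ) := by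
  have hsq : ∀ h : α → ℝ, ∫ x, ρ x * h x ^ 2 ∂μ = ∫ x, (√(ρ x) * h x) ^ (2 : ℝ) ∂μ :=
    fun h => integral_congr_ae <| hρ.mono fun x hx => by
      simp only [Real.rpow_two, mul_pow, Real.sq_sqrt hx]
  have hprod : ∫ x, ρ x * (f x * g x) ∂μ = ∫ x, (√(ρ x) * f x) * (√(ρ x) * g x) ∂μ :=
    integral_congr_ae <| hρ.mono fun x hx => by
      dsimp only
      rw [mul_mul_mul_comm, Real.mul_self_sqrt hx]
  rw [hprod, hsq, hsq]
  exact integral_mul_le_Lp_mul_Lq_of_nonneg Real.HolderConjugate.two_two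
    (.of_forall fun x => mul_nonneg (Real.sqrt_nonneg _) (hf x))
    (.of_forall fun x => mul_nonneg (Real.sqrt_nonneg _) (hg x))
    (by simpa using hfL) (by simpa using hgL)

section Profile

variable {m : ℕ} {u : ℝ → ℂ} {w : ℝ → ℝ}

lemma pow_mul_norm_sq_le_two_mul_integral (hu : ContDiff ℝ 1 u)
    (hsupp : HasCompactSupport u) (hw : ∀ t, ‖deriv u t‖ ≤ w t) (hwc : Continuous w)
    {r : ℝ} (hr : 0 ≤ r) :
    r ^ m * ‖u r‖ ^ 2 ≤ 2 * ∫ t in Ioi 0, t ^ m * (‖u t‖ * w t) := by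
  set F : ℝ → ℝ := fun t => t ^ m * ‖u t‖ ^ 2
  have hF : ContDiff ℝ 1 F := (contDiff_id.pow m).mul (hu.norm_sq ℝ)
  have hFsupp : HasCompactSupport F :=
    (hsupp.comp_left (g := fun z : ℂ => ‖z‖ ^ 2) (by simp)).mul_left
  have hderivF (t : ℝ) : deriv F t =
      m * t ^ (m - 1) * ‖u t‖ ^ 2 + t ^ m * (2 * inner ℝ (u t) (deriv u t)) :=
    ((hasDerivAt_pow m t).mul
      ((hu.differentiable one_ne_zero t).hasDerivAt.norm_sq)).deriv
  have hint : Integrable fun t => t ^ m * (‖u t‖ * w t) :=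
    ((continuous_pow m).mul (hu.continuous.norm.mul hwc)).integrable_of_hasCompactSupport
      hsupp.norm.mul_right.mul_left
  have hnonneg {t : ℝ} (ht : 0 ≤ t) : 0 ≤ t ^ m * (‖u t‖ * w t) :=
    mul_nonneg (pow_nonneg ht m) (mul_nonneg (norm_nonneg _) ((norm_nonneg _).trans (hw t)))
  calc r ^ m * ‖u r‖ ^ 2 = ∫ t in Ioi r, -deriv F t := by
        rw [integral_neg, hFsupp.integral_Ioi_deriv_eq hF r, neg_neg]
    _ ≤ ∫ t in Ioi r, 2 * (t ^ m * (‖u t‖ * w t)) := by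
        refine setIntegral_mono_on ?_ (hint.const_mul 2).integrableOn measurableSet_Ioi
          fun t ht => ?_
        · exact ((hF.continuous_deriv le_rfl).integrable_of_hasCompactSupport
            hFsupp.deriv).neg.integrableOn
        have ht : 0 ≤ t := hr.trans (le_of_lt ht)
        have hinner : -inner ℝ (u t) (deriv u t) ≤ ‖u t‖ * w t :=
          (neg_le_abs _).trans <| (abs_real_inner_le_norm _ _).trans <|
            mul_le_mul_of_nonneg_left (hw t) (norm_nonneg _)
        have : 0 ≤ m * t ^ (m - 1) * ‖u t‖ ^ 2 := by positivity
        rw [hderivF]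
        nlinarith [pow_nonneg ht m]
    _ = 2 * ∫ t in Ioi r, t ^ m * (‖u t‖ * w t) := integral_const_mul _ _
    _ ≤ 2 * ∫ t in Ioi 0, t ^ m * (‖u t‖ * w t) := by
        gcongr
        · exact (ae_restrict_mem measurableSet_Ioi).mono fun t ht => hnonneg (le_of_lt ht)
        · exact hint.integrableOn

lemma pow_mul_norm_sq_le_two_mul_weighted_L2 (hu : ContDiff ℝ 1 u) (hsupp : HasCompactSupport u)
    (hw : ∀ t, ‖deriv u t‖ ≤ w t) (hwc : Continuous w) (hwsupp : HasCompactSupport w)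
    {r : ℝ} (hr : 0 ≤ r) :
    r ^ m * ‖u r‖ ^ 2 ≤ 2 * ((∫ t in Ioi 0, t ^ m * ‖u t‖ ^ 2) ^ (1 / 2 : ℝ) *
      (∫ t in Ioi 0, t ^ m * w t ^ 2) ^ (1 / 2 : ℝ)) := by
  have hmemLp {g : ℝ → ℝ} (hg : Continuous g) (hgsupp : HasCompactSupport g) :
      MemLp (fun t => √(t ^ m) * g t) 2 (volume.restrict (Ioi 0)) :=
    (((continuous_pow m).sqrt.mul hg).memLp_of_hasCompactSupport hgsupp.mul_left).restrict _
  refine (pow_mul_norm_sq_le_two_mul_integral hu hsupp hw hwc hr).trans ?_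
  gcongr
  exact integral_mul_mul_le_L2_mul_L2_of_nonneg
    ((ae_restrict_mem measurableSet_Ioi).mono fun t ht => pow_nonneg (le_of_lt ht) m)
    (fun t => norm_nonneg _) (fun t => (norm_nonneg _).trans (hw t))
    (hmemLp hu.continuous.norm hsupp.norm) (hmemLp hwc hwsupp)

end Profile

lemma norm_deriv_comp_smul_le {E F : Type*} [NormedAddCommGroup E] [NormedSpace ℝ E]
    [NormedAddCommGroup F] [NormedSpace ℝ F] {f : E → F} (hf : Differentiable ℝ f) (e : E)
    (t : ℝ) : ‖deriv (fun s : ℝ => f (s • e)) t‖ ≤ ‖fderiv ℝ f (t • e)‖ * ‖e‖ := by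
  have : HasDerivAt (fun s : ℝ => f (s • e)) (fderiv ℝ f (t • e) e) t :=
    (hf _).hasFDerivAt.comp_hasDerivAt t (by simpa using (hasDerivAt_id t).smul_const e)
  rw [this.deriv]
  exact (fderiv ℝ f (t • e)).le_opNorm e

section Radial

variable {E : Type*} [NormedAddCommGroup E] [InnerProductSpace ℝ E]

lemma norm_fderiv_eq_of_norm_eq {F : Type*} [NormedAddCommGroup F] [NormedSpace ℝ F]
    {f : E → F} (hrad : ∀ x y : E, ‖x‖ = ‖y‖ → f x = f y) {a b : E} (hab : ‖a‖ = ‖b‖) :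
    ‖fderiv ℝ f a‖ = ‖fderiv ℝ f b‖ := by
  -- the reflection exchanging `a` and `b` preserves `f`
  set L := (ℝ ∙ (a - b))ᗮ.reflection
  have hfL : f ∘ L.toContinuousLinearEquiv = f := funext fun z => hrad _ _ (L.norm_map z)
  have hderiv : fderiv ℝ f a = (fderiv ℝ f b).comp (L.toContinuousLinearEquiv : E →L[ℝ] E) := by
    conv_lhs => rw [← hfL, L.toContinuousLinearEquiv.comp_right_fderiv]
    simp [L, Submodule.reflection_sub hab]
  rw [hderiv]
  exact ContinuousLinearMap.opNorm_comp_linearIsometryEquiv _ L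

lemma apply_eq_apply_norm_smul_of_radial {F : Type*} {f : E → F}
    (hrad : ∀ x y : E, ‖x‖ = ‖y‖ → f x = f y) {e : E} (he : ‖e‖ = 1) (y : E) :
    f y = f (‖y‖ • e) :=
  hrad _ _ (by simp [norm_smul, he])

theorem strauss_radial_estimate [FiniteDimensional ℝ E] [Nontrivial E] [MeasurableSpace E]
    [BorelSpace E] (μ : Measure E) [μ.IsAddHaarMeasure] {f : E → ℂ} (hf : ContDiff ℝ 1 f)
    (hsupp : HasCompactSupport f) (hrad : ∀ x y : E, ‖x‖ = ‖y‖ → f x = f y) (x : E) :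
    finrank ℝ E * μ.real (ball 0 1) * (‖x‖ ^ (finrank ℝ E - 1) * ‖f x‖ ^ 2) ≤
      2 * ((∫ y, ‖f y‖ ^ 2 ∂μ) ^ (1 / 2 : ℝ) * (∫ y, ‖fderiv ℝ f y‖ ^ 2 ∂μ) ^ (1 / 2 : ℝ)) := by
  set c := finrank ℝ E * μ.real (ball 0 1)
  obtain ⟨e, he⟩ := exists_norm_eq E zero_le_one
  have hline : Isometry fun t : ℝ => t • e :=
    .of_dist_eq fun s t => by rw [dist_eq_norm, dist_eq_norm, ← sub_smul, norm_smul, he, mul_one]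
  have hlineC : ContDiff ℝ 1 fun t : ℝ => t • e := contDiff_id.smul contDiff_const
  set u : ℝ → ℂ := fun t => f (t • e)
  set w : ℝ → ℝ := fun t => ‖fderiv ℝ f (t • e)‖
  have hderiv (t : ℝ) : ‖deriv u t‖ ≤ w t := by
    simpa [he] using norm_deriv_comp_smul_le (hf.differentiable one_ne_zero) e t
  have hpolar (U : ℝ → ℝ) : ∫ y, U ‖y‖ ∂μ = c * ∫ t in Ioi 0, t ^ (finrank ℝ E - 1) * U t := by
    rw [integral_fun_norm_addHaar μ U]
    simp only [nsmul_eq_mul, smul_eq_mul, c, mul_assoc]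
  set X := ∫ t in Ioi 0, t ^ (finrank ℝ E - 1) * ‖u t‖ ^ 2
  set Y := ∫ t in Ioi 0, t ^ (finrank ℝ E - 1) * w t ^ 2
  have hA : ∫ y, ‖f y‖ ^ 2 ∂μ = c * X :=
    (integral_congr_ae (.of_forall fun y =>
      congrArg (‖·‖ ^ 2) (apply_eq_apply_norm_smul_of_radial hrad he y))).trans
      (hpolar fun s => ‖u s‖ ^ 2)
  have hB : ∫ y, ‖fderiv ℝ f y‖ ^ 2 ∂μ = c * Y :=
    (integral_congr_ae (.of_forall fun y =>
      congrArg (· ^ 2) (norm_fderiv_eq_of_norm_eq hrad (by simp [norm_smul, he])))).trans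
      (hpolar fun s => w s ^ 2)
  have hc : 0 ≤ c := by positivity
  have hnonneg (U : ℝ → ℝ) : 0 ≤ ∫ t in Ioi 0, t ^ (finrank ℝ E - 1) * U t ^ 2 :=
    setIntegral_nonneg measurableSet_Ioi fun t ht => by
      have := le_of_lt (mem_Ioi.mp ht)
      positivity
  have hprofile :
      ‖x‖ ^ (finrank ℝ E - 1) * ‖u ‖x‖‖ ^ 2 ≤ 2 * (X ^ (1 / 2 : ℝ) * Y ^ (1 / 2 : ℝ)) :=
    pow_mul_norm_sq_le_two_mul_weighted_L2 (hf.comp hlineC)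
      (hsupp.comp_isClosedEmbedding hline.isClosedEmbedding) hderiv
      ((hf.continuous_fderiv one_ne_zero).comp hlineC.continuous).norm
      ((hsupp.fderiv ℝ).comp_isClosedEmbedding hline.isClosedEmbedding).norm (norm_nonneg x)
  rw [hA, hB, Real.mul_rpow hc (hnonneg fun t => ‖u t‖), Real.mul_rpow hc (hnonneg w),
    apply_eq_apply_norm_smul_of_radial hrad he x, ← Real.sqrt_eq_rpow c]
  calc c * (‖x‖ ^ (finrank ℝ E - 1) * ‖u ‖x‖‖ ^ 2)
      ≤ c * (2 * (X ^ (1 / 2 : ℝ) * Y ^ (1 / 2 : ℝ))) := mul_le_mul_of_nonneg_left hprofile hc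
    _ = 2 * (√c * X ^ (1 / 2 : ℝ) * (√c * Y ^ (1 / 2 : ℝ))) := by
      linear_combination (-2 * X ^ (1 / 2 : ℝ) * Y ^ (1 / 2 : ℝ)) * Real.mul_self_sqrt hc

end Radial

lemma le_sqrt_mul_mul_rpow_of_sq_le {a C r s A B R : ℝ} (hC : 0 ≤ C) (hr : 0 ≤ r)
    (hA : 0 ≤ A) (hB : 0 ≤ B) (hAR : A ≤ R) (hBR : B ≤ R)
    (h : a ^ 2 ≤ C * r ^ (-s) * (A * B)) : a ≤ √C * R * r ^ (-s / 2) := by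
  have hR : 0 ≤ R := hA.trans hAR
  calc a ≤ √(a ^ 2) := by rw [Real.sqrt_sq_eq_abs]; exact le_abs_self a
    _ ≤ √(C * r ^ (-s) * (R * R)) := Real.sqrt_le_sqrt (h.trans (by gcongr))
    _ = √C * R * r ^ (-s / 2) := by
      rw [Real.sqrt_mul (by positivity), Real.sqrt_mul hC, Real.sqrt_mul_self hR,
        Real.sqrt_eq_rpow (r ^ (-s)), ← Real.rpow_mul hr]
      ring_nf

/-- Strauss-type radial decay estimate. For `n ≥ 2` there is a constant
`C_n > 0` depending only on `n` such that every `C¹` compactly supported radial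
`f : ℝⁿ → ℂ` satisfies `|f x|² ≤ C_n |x|^{-(n-1)} ‖f‖_{L²} ‖∇f‖_{L²}` for `x ≠ 0`;
in particular if `‖f‖_{L²}, ‖∇f‖_{L²} ≤ R` then
`|f x| ≤ √C_n · R · |x|^{-(n-1)/2}` for `|x| ≥ 1`. -/
theorem stmt6 (n : ℕ) (hn : 2 ≤ n) :
    ∃ C > 0, ∀ f : EuclideanSpace ℝ (Fin n) → ℂ,
      ContDiff ℝ 1 f → HasCompactSupport f →
      (∀ x y : EuclideanSpace ℝ (Fin n), ‖x‖ = ‖y‖ → f x = f y) →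
      (∀ x : EuclideanSpace ℝ (Fin n), x ≠ 0 →
        ‖f x‖ ^ 2 ≤ C * ‖x‖ ^ (-((n:ℝ) - 1)) *
          ((∫ y, ‖f y‖ ^ 2) ^ ((1:ℝ)/2) * (∫ y, ‖fderiv ℝ f y‖ ^ 2) ^ ((1:ℝ)/2))) ∧
      (∀ R > 0, (∫ y, ‖f y‖ ^ 2) ^ ((1:ℝ)/2) ≤ R →
        (∫ y, ‖fderiv ℝ f y‖ ^ 2) ^ ((1:ℝ)/2) ≤ R →
        ∀ x : EuclideanSpace ℝ (Fin n), 1 ≤ ‖x‖ →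
          ‖f x‖ ≤ Real.sqrt C * R * ‖x‖ ^ (-((n:ℝ) - 1)/2)) := by
  have : Nonempty (Fin n) := ⟨⟨0, by omega⟩⟩
  set c := (n : ℝ) * volume.real (ball (0 : EuclideanSpace ℝ (Fin n)) 1)
  have hc : 0 < c := mul_pos (by positivity) <| ENNReal.toReal_pos
    (measure_ball_pos _ _ one_pos).ne' measure_ball_lt_top.ne
  refine ⟨2 / c, by positivity, fun f hf hsupp hrad => ?_⟩
  set P := (∫ y, ‖f y‖ ^ 2) ^ ((1:ℝ)/2) * (∫ y, ‖fderiv ℝ f y‖ ^ 2) ^ ((1:ℝ)/2)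
  have hdecay (x : EuclideanSpace ℝ (Fin n)) (hx : x ≠ 0) :
      ‖f x‖ ^ 2 ≤ 2 / c * ‖x‖ ^ (-((n:ℝ) - 1)) * P := by
    have h : c * (‖x‖ ^ (n - 1) * ‖f x‖ ^ 2) ≤ 2 * P := by
      simpa only [finrank_euclideanSpace_fin] using strauss_radial_estimate volume hf hsupp hrad x
    have hr : 0 < ‖x‖ ^ (n - 1) := pow_pos (norm_pos_iff.mpr hx) _
    have hk : (n : ℝ) - 1 = (n - 1 : ℕ) := by rw [Nat.cast_sub (by omega), Nat.cast_one]
    rw [hk, Real.rpow_neg (norm_nonneg x), Real.rpow_natCast]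
    calc ‖f x‖ ^ 2 = c * (‖x‖ ^ (n - 1) * ‖f x‖ ^ 2) / c / ‖x‖ ^ (n - 1) := by field_simp
      _ ≤ 2 * P / c / ‖x‖ ^ (n - 1) := by gcongr
      _ = 2 / c * (‖x‖ ^ (n - 1))⁻¹ * P := by ring
  exact ⟨hdecay, fun R _ hAR hBR x hx => le_sqrt_mul_mul_rpow_of_sq_le (by positivity)
    (norm_nonneg x) (by positivity) (by positivity) hAR hBR
    (hdecay x (norm_pos_iff.mp (zero_lt_one.trans_le hx)))⟩
end
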